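/- Every finitely generated subgroup of GL(n, ℂ) is residually finite. -/

import Mathlib

/-!
The entries of finitely many generators of `H` and of their inverses generate a finitely
generated `ℤ`-subalgebra `A` of `ℂ`, and `H` embeds into `GL n A`. Since `ℤ` is a Jacobson ring,
so is the reduced ring `A`: every nonzero `a ∈ A` avoids some maximal ideal `m`, and by Zariski's
lemma `A ⧸ m` is a finite field. Given `g ≠ 1`, pick such an `m` avoiding a nonzero entry of
`g - 1`; reduction modulo `m` maps `H` to the finite group `GL n (A ⧸ m)` and does not kill `g`.
-/

instance Int.isJacobsonRing : IsJacobsonRing ℤ := by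
  rw [isJacobsonRing_iff_prime_eq]
  intro P hP
  rcases eq_or_ne P ⊥ with rfl | hP0
  · refine le_antisymm (fun x hx => ?_) Ideal.le_jacobson
    have h₁ := Int.isUnit_iff.mp (Ideal.mem_jacobson_bot.mp hx 1)
    have h₂ := Int.isUnit_iff.mp (Ideal.mem_jacobson_bot.mp hx (-1))
    rw [Ideal.mem_bot]
    omega
  · have := IsPrime.to_maximal_ideal hP0
    exact Ideal.jacobson_eq_self_of_isMaximal

theorem finite_of_finiteType_int (k : Type*) [Field k] [alg : Algebra ℤ k]
    [Algebra.FiniteType ℤ k] : Finite k := by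
  obtain rfl := Subsingleton.elim alg (Ring.toIntAlgebra k)
  -- Zariski's lemma makes `k` a finitely generated abelian group, and `k` has positive
  -- characteristic because `ℤ` is not a field, so `k` is torsion.
  have : Module.Finite ℤ k := finite_of_finite_type_of_isJacobsonRing ℤ k
  have : (RingHom.ker (algebraMap ℤ k)).IsMaximal := by
    rw [RingHom.ker_eq_comap_bot]
    exact Ideal.isMaximal_comap_of_isIntegral_of_isMaximal ⊥
  obtain ⟨q, hq, hq0⟩ := Submodule.exists_mem_ne_zero_of_ne_bot fun h =>
    Int.not_isField (Ring.isField_iff_maximal_bot.mpr (h ▸ this))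
  refine Module.finite_of_fg_torsion k fun x => ⟨⟨q, mem_nonZeroDivisors_of_ne_zero hq0⟩, ?_⟩
  simpa [Submonoid.smul_def] using Or.inl (RingHom.mem_ker.mp hq)

theorem exists_isMaximal_finite_quotient_notMem {R : Type*} [CommRing R] [IsReduced R]
    [Algebra ℤ R] [Algebra.FiniteType ℤ R] {a : R} (ha : a ≠ 0) :
    ∃ m : Ideal R, m.IsMaximal ∧ Finite (R ⧸ m) ∧ a ∉ m := by
  have : IsJacobsonRing R := isJacobsonRing_of_finiteType (A := ℤ)
  have hbot : (⊥ : Ideal R).jacobson = ⊥ := IsJacobsonRing.out' ⊥ Ideal.isRadical_bot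
  obtain ⟨m, ⟨-, hm⟩, ham⟩ := Ideal.eq_jacobson_iff_notMem.mp hbot a ha
  have : Algebra.FiniteType ℤ (R ⧸ m) :=
    .of_surjective (Ideal.Quotient.mkₐ ℤ m) (Ideal.Quotient.mkₐ_surjective ℤ m)
  let := Ideal.Quotient.field m
  exact ⟨m, hm, finite_of_finiteType_int _, ham⟩

universe u

namespace Group

theorem ResiduallyFinite.of_injective {G H : Type*} [Group G] [Group H] [ResiduallyFinite H]
    {f : G →* H} (hf : Function.Injective f) : ResiduallyFinite G := by
  rw [residuallyFinite_iff_forall_finiteIndexNormalSubgroup]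
  intro g hg
  apply hf
  rw [map_one]
  exact eq_one_iff_forall_finiteIndexNormalSubroup (f g) fun K => hg (K.comap f)

theorem exists_finite_monoidHom_ne_one {G : Type u} [Group G] [ResiduallyFinite G] {g : G}
    (hg : g ≠ 1) : ∃ (F : Type u) (_ : Group F) (_ : Finite F) (φ : G →* F), φ g ≠ 1 := by
  obtain ⟨N, hN⟩ := exists_finiteIndexNormalSubgroup_notMem g hg
  exact ⟨G ⧸ N.toSubgroup, inferInstance, inferInstance, QuotientGroup.mk' _, by simpa⟩

end Group

namespace Matrix.GeneralLinearGroup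

variable {n : Type*} [Fintype n] [DecidableEq n]

theorem map_injective {R S : Type*} [CommRing R] [CommRing S] {f : R →+* S}
    (hf : Function.Injective f) : Function.Injective (map (n := n) f) := fun _ _ h =>
  Units.ext (Matrix.map_injective hf (congrArg Units.val h))

theorem mem_range_map {R S : Type*} [CommRing R] [CommRing S] {f : R →+* S}
    (hf : Function.Injective f) {g : GL n S} (hg : ∀ i j, g i j ∈ f.range)
    (hg' : ∀ i j, g⁻¹ i j ∈ f.range) : g ∈ (map f).range := by
  choose M hM using hg
  choose N hN using hg'
  have hmap : ∀ {M' : Matrix n n R}, M'.map f = 1 → M' = 1 := fun h =>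
    Matrix.map_injective hf (h.trans (Matrix.map_one f f.map_zero f.map_one).symm)
  have hgM : (Matrix.of M).map f = g := Matrix.ext hM
  have hgN : (Matrix.of N).map f = ↑g⁻¹ := Matrix.ext hN
  have hMN : Matrix.of M * Matrix.of N = 1 := hmap <| by
    rw [Matrix.map_mul, hgM, hgN, ← Units.val_mul, mul_inv_cancel, Units.val_one]
  have hNM : Matrix.of N * Matrix.of M = 1 := hmap <| by
    rw [Matrix.map_mul, hgM, hgN, ← Units.val_mul, inv_mul_cancel, Units.val_one]
  exact ⟨⟨Matrix.of M, Matrix.of N, hMN, hNM⟩, Units.ext hgM⟩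

instance residuallyFinite {R : Type*} [CommRing R] [IsReduced R] [Algebra ℤ R]
    [Algebra.FiniteType ℤ R] : Group.ResiduallyFinite (GL n R) := by
  refine Group.residuallyFinite_of_forall_exists_finite_monoidHom fun g hg => ?_
  obtain ⟨i, j, hij⟩ : ∃ i j, g i j - (1 : Matrix n n R) i j ≠ 0 := by
    by_contra! h
    exact hg (Units.ext (Matrix.ext fun i j => sub_eq_zero.mp (h i j)))
  obtain ⟨m, -, hfin, hm⟩ := exists_isMaximal_finite_quotient_notMem hij
  refine ⟨GL n (R ⧸ m), inferInstance, inferInstance, map (Ideal.Quotient.mk m), fun h => hm ?_⟩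
  have := congrArg (fun x : GL n (R ⧸ m) => x i j) h
  rw [← Ideal.Quotient.eq]
  simpa [Matrix.GeneralLinearGroup.map_apply, Matrix.one_apply, apply_ite] using this

theorem exists_fg_subalgebra_le_range_map {K : Type*} [CommRing K] {G : Subgroup (GL n K)}
    (hG : G.FG) : ∃ A : Subalgebra ℤ K, A.FG ∧ G ≤ (map (algebraMap A K)).range := by
  obtain ⟨S, rfl⟩ := hG
  let E : Set K := ⋃ s ∈ S, ⋃ i, ⋃ j, {s i j, s⁻¹ i j}
  have hE : E.Finite := S.finite_toSet.biUnion fun s _ =>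
    Set.finite_iUnion fun i => Set.finite_iUnion fun j => Set.toFinite _
  have hmem : ∀ s ∈ S, ∀ i j, s i j ∈ E ∧ s⁻¹ i j ∈ E := fun s hs i j => by
    simp only [E, Set.mem_iUnion, Set.mem_insert_iff, Set.mem_singleton_iff]
    exact ⟨⟨s, hs, i, j, Or.inl rfl⟩, ⟨s, hs, i, j, Or.inr rfl⟩⟩
  refine ⟨Algebra.adjoin ℤ E, ⟨hE.toFinset, by simp⟩, (Subgroup.closure_le _).mpr fun s hs => ?_⟩
  exact mem_range_map Subtype.val_injective
    (fun i j => ⟨⟨_, Algebra.subset_adjoin (hmem s hs i j).1⟩, rfl⟩)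
    (fun i j => ⟨⟨_, Algebra.subset_adjoin (hmem s hs i j).2⟩, rfl⟩)

theorem residuallyFinite_of_fg {K : Type*} [CommRing K] [IsReduced K] (G : Subgroup (GL n K))
    [hG : Group.FG G] : Group.ResiduallyFinite G := by
  obtain ⟨A, hA, hGA⟩ := exists_fg_subalgebra_le_range_map ((Group.fg_iff_subgroup_fg G).mp hG)
  have : Algebra.FiniteType ℤ A := (Subalgebra.fg_iff_finiteType A).mp hA
  have : IsReduced A := isReduced_of_injective A.val Subtype.val_injective
  have hf := map_injective (n := n) (f := algebraMap A K) Subtype.val_injective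
  exact .of_injective (f := (MonoidHom.ofInjective hf).symm.toMonoidHom.comp
    (Subgroup.inclusion hGA))
    ((MonoidHom.ofInjective hf).symm.injective.comp (Subgroup.inclusion_injective hGA))

end Matrix.GeneralLinearGroup

/-- Malcev: every finitely generated subgroup of GL(n, ℂ) is residually finite. -/
theorem stmt12 (n : ℕ) (H : Subgroup (Matrix.GeneralLinearGroup (Fin n) ℂ))
    (hfg : Group.FG H) :
    ∀ g : H, g ≠ 1 →
      ∃ (F : Type) (_ : Group F) (_ : Finite F) (φ : H →* F), φ g ≠ 1 := by
  have := Matrix.GeneralLinearGroup.residuallyFinite_of_fg H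
  exact fun g hg => Group.exists_finite_monoidHom_ne_one hg
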